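/- arXiv:1712.10205 — 4 statements merged into one kernel-verified Lean document; each statement's English description precedes it below -/
import Mathlib

section
/- If four points a, b, a', b' are in convex position (each an extreme point of their convex hull) and a point x lies strictly inside segment ab, then x cannot lie strictly outside segment a'b' on the line a'b'. More precisely: if segments ab and a'b' are two sides or diagonals of a convex quadrilateral on these four points, a point lying in the open segment ab and on the line through a' and b' must lie in the closed segment a'b'. -/
/-- If `a, b, b', a'` are in strictly convex position, in this cyclic order around
their convex hull (each is an extreme point of the hull, and the diagonals `a b'`
and `b a'` of the quadrilateral meet), and `x` lies in the open segment `(a, b)`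
and on the affine line through `a'` and `b'`, then `x` lies in the closed
segment `[a', b']`. -/
theorem stmt_9 (a b a' b' x : ℂ)
    (hext : ∀ p ∈ ({a, b, a', b'} : Set ℂ),
      p ∈ Set.extremePoints ℝ (convexHull ℝ ({a, b, a', b'} : Set ℂ)))
    (horder : (segment ℝ a b' ∩ segment ℝ b a').Nonempty)
    (hx : x ∈ openSegment ℝ a b)
    (hline : x ∈ affineSpan ℝ ({a', b'} : Set ℂ)) :
    x ∈ segment ℝ a' b' := by
  have hxhull : x ∈ convexHull ℝ ({a, b, a', b'} : Set ℂ) := by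
    have h1 : x ∈ segment ℝ a b := openSegment_subset_segment ℝ a b hx
    have h2 : segment ℝ a b ⊆ convexHull ℝ ({a, b, a', b'} : Set ℂ) := by
      rw [← convexHull_pair]
      exact convexHull_mono (by intro p hp; simp at hp ⊢; tauto)
    exact h2 h1
  have ha'hull : a' ∈ convexHull ℝ ({a, b, a', b'} : Set ℂ) :=
    subset_convexHull ℝ _ (by simp)
  have hb'hull : b' ∈ convexHull ℝ ({a, b, a', b'} : Set ℂ) :=
    subset_convexHull ℝ _ (by simp)
  have hexta' := hext a' (by simp)
  have hextb' := hext b' (by simp)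
  have hline' : (x - a') +ᵥ a' ∈ line[ℝ, a', b'] := by
    simpa using hline
  obtain ⟨t, ht'⟩ := vadd_left_mem_affineSpan_pair.mp hline'
  simp only [vsub_eq_sub] at ht'
  have ht : t • (b' - a') + a' = x := by rw [ht']; ring
  rcases le_or_gt t 1 with ht1 | ht1
  · rcases le_or_gt 0 t with ht0 | ht0
    · -- 0 ≤ t ≤ 1
      rw [segment_eq_image']
      exact ⟨t, ⟨ht0, ht1⟩, by rw [← ht]; ring⟩
    · -- t < 0 : a' strictly between b' and x
      have ha'open : a' ∈ openSegment ℝ b' x := by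
        have hpos : (0:ℝ) < 1 - t := by linarith
        refine ⟨-t/(1-t), 1/(1-t), div_pos (by linarith) hpos, div_pos one_pos hpos, by
          field_simp; ring, ?_⟩
        rw [← ht]
        have h : (1:ℝ) - t ≠ 0 := by linarith
        match_scalars <;> field_simp <;> ring
      obtain ⟨h1, h2⟩ := (mem_extremePoints.mp hexta').2 _ hb'hull _ hxhull ha'open
      rw [h2]
      exact left_mem_segment ℝ a' b'
  · -- t > 1 : b' strictly between a' and x
    have hb'open : b' ∈ openSegment ℝ a' x := by
      refine ⟨1 - 1/t, 1/t, by
        have : 1/t < 1 := by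
          rw [div_lt_one (by linarith)]; linarith
        linarith, by positivity, by ring, ?_⟩
      rw [← ht]
      have h : (t:ℝ) ≠ 0 := by linarith
      match_scalars <;> field_simp <;> ring
    obtain ⟨h1, h2⟩ := (mem_extremePoints.mp hextb').2 _ ha'hull _ hxhull hb'open
    rw [h2]
    exact right_mem_segment ℝ a' b'
end

section
/- Two distinct positively homothetic (directly similar with the same rotation angle) triangles cannot both have all vertices on the same strictly convex closed curve. -/
open Set

namespace Stmt12Aux

variable {K : Set ℂ}

lemma param_inj {w : ℂ} (hw : w ≠ 0) {q : ℂ} {s t : ℝ}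
    (h : q + s • w = q + t • w) : s = t := by
  by_contra hst
  apply hw
  have h2 : (s - t) • w = 0 := by
    have h3 : s • w = t • w := add_left_cancel h
    rw [sub_smul, h3, sub_self]
  rcases smul_eq_zero.mp h2 with h3 | h3
  · exact (hst (sub_eq_zero.mp h3)).elim
  · exact h3

lemma mid_interior (hsc : StrictConvex ℝ K) {q w : ℂ} (hw : w ≠ 0)
    {s1 s2 s3 : ℝ} (h12 : s1 < s2) (h23 : s2 < s3)
    (h1 : q + s1 • w ∈ K) (h3 : q + s3 • w ∈ K) :
    q + s2 • w ∈ interior K := by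
  have h13 : s1 < s3 := h12.trans h23
  have hd : (0:ℝ) < s3 - s1 := by linarith
  set t : ℝ := (s3 - s2) / (s3 - s1) with ht
  have ht1 : 0 < t := div_pos (by linarith) hd
  have ht2 : 0 < 1 - t := by
    rw [ht, sub_pos, div_lt_one hd]; linarith
  have hne : q + s1 • w ≠ q + s3 • w := fun h => absurd (param_inj hw h) (by linarith)
  have key := hsc h1 h3 hne ht1 ht2 (by ring)
  have hs : t * s1 + (1 - t) * s3 = s2 := by
    rw [ht]; field_simp; ring
  have heq : t • (q + s1 • w) + (1 - t) • (q + s3 • w) = q + s2 • w := by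
    calc t • (q + s1 • w) + (1 - t) • (q + s3 • w)
        = q + (t * s1 + (1 - t) * s3) • w := by
          simp only [Complex.real_smul]; push_cast; ring
      _ = q + s2 • w := by rw [hs]
  rwa [heq] at key

lemma sandwich (hsc : StrictConvex ℝ K) (hcl : IsClosed K) {q w : ℂ} (hw : w ≠ 0)
    {σ1 σ2 s : ℝ} (hσ : σ1 < σ2)
    (h1 : q + σ1 • w ∈ frontier K) (h2 : q + σ2 • w ∈ frontier K)
    (hx : q + s • w ∈ interior K) : σ1 < s ∧ s < σ2 := by
  have hfs : frontier K ⊆ K := hcl.frontier_subset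
  constructor
  · rcases lt_trichotomy s σ1 with h | h | h
    · exact absurd (mid_interior hsc hw h hσ (interior_subset hx) (hfs h2)) h1.2
    · rw [h] at hx; exact absurd hx h1.2
    · exact h
  · rcases lt_trichotomy s σ2 with h | h | h
    · exact h
    · rw [h] at hx; exact absurd hx h2.2
    · exact absurd (mid_interior hsc hw hσ h (hfs h1) (interior_subset hx)) h2.2

lemma sorted_three (hsc : StrictConvex ℝ K) (hcl : IsClosed K) {q w : ℂ} (hw : w ≠ 0)
    {s1 s2 s3 : ℝ} (h12 : s1 < s2) (h23 : s2 < s3)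
    (h1 : q + s1 • w ∈ frontier K) (h2 : q + s2 • w ∈ frontier K)
    (h3 : q + s3 • w ∈ frontier K) : False :=
  h2.2 (mid_interior hsc hw h12 h23 (hcl.frontier_subset h1) (hcl.frontier_subset h3))

lemma three_frontier (hsc : StrictConvex ℝ K) (hcl : IsClosed K) {q w : ℂ} (hw : w ≠ 0)
    {s1 s2 s3 : ℝ} (d12 : s1 ≠ s2) (d13 : s1 ≠ s3) (d23 : s2 ≠ s3)
    (h1 : q + s1 • w ∈ frontier K) (h2 : q + s2 • w ∈ frontier K)
    (h3 : q + s3 • w ∈ frontier K) : False := by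
  rcases lt_or_gt_of_ne d12 with a12 | a12 <;>
    rcases lt_or_gt_of_ne d13 with a13 | a13 <;>
      rcases lt_or_gt_of_ne d23 with a23 | a23
  all_goals first
    | exact sorted_three hsc hcl hw a12 a23 h1 h2 h3
    | exact sorted_three hsc hcl hw a13 a23 h1 h3 h2
    | exact sorted_three hsc hcl hw a12 a13 h2 h1 h3
    | exact sorted_three hsc hcl hw a23 a13 h2 h3 h1
    | exact sorted_three hsc hcl hw a13 a12 h3 h1 h2
    | exact sorted_three hsc hcl hw a23 a12 h3 h2 h1
    | linarith

lemma opp_ray (hsc : StrictConvex ℝ K) {p x y : ℂ} (hpK : p ∉ K)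
    (hx : x ∈ K) (hy : y ∈ K) {τ : ℝ} (hτ : τ < 0) (h : y - p = τ • (x - p)) : False := by
  apply hpK
  have hne : (1:ℝ) - τ ≠ 0 := by intro hh; linarith
  have key : y + (-τ) • x = (1 - τ) • p := by
    simp only [Complex.real_smul] at h ⊢
    push_cast
    linear_combination h
  have hp : ((1-τ)⁻¹) • y + ((1-τ)⁻¹ * (-τ)) • x = p := by
    rw [← smul_smul, ← smul_add, key, smul_smul, inv_mul_cancel₀ hne, one_smul]
  have w1 : (0:ℝ) ≤ (1-τ)⁻¹ := le_of_lt (inv_pos.mpr (by linarith))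
  have w2 : (0:ℝ) ≤ (1-τ)⁻¹ * (-τ) := by
    apply mul_nonneg w1; linarith
  have hsum : (1-τ)⁻¹ + (1-τ)⁻¹ * (-τ) = 1 := by field_simp; ring
  have := hsc.convex hy hx w1 w2 hsum
  rwa [hp] at this



/-- determinant of two planar vectors -/
noncomputable def det2 (z w : ℂ) : ℝ := z.re * w.im - z.im * w.re

lemma decomp {v z : ℂ} (h : det2 v z ≠ 0) (u : ℂ) :
    u = (det2 u z / det2 v z) • v + (det2 v u / det2 v z) • z := by
  simp only [det2] at h ⊢
  apply Complex.ext <;>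
    simp only [Complex.add_re, Complex.add_im, Complex.real_smul, Complex.mul_re,
      Complex.mul_im, Complex.ofReal_re, Complex.ofReal_im] <;>
    field_simp <;> ring_nf <;> field_simp [show z.im * v.re - z.re * v.im ≠ 0 by intro hh; apply h; linarith]

lemma parallel_of_det {v u : ℂ} (hv : v ≠ 0) (h : det2 v u = 0) : ∃ τ : ℝ, u = τ • v := by
  have hv2 : v.re ^ 2 + v.im ^ 2 ≠ 0 := by
    have h0 := Complex.normSq_pos.mpr hv
    rw [Complex.normSq_apply] at h0
    nlinarith
  refine ⟨(u.re * v.re + u.im * v.im) / (v.re ^ 2 + v.im ^ 2), ?_⟩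
  simp only [det2] at h
  apply Complex.ext <;>
    simp only [Complex.real_smul, Complex.mul_re, Complex.mul_im,
      Complex.ofReal_re, Complex.ofReal_im] <;>
    field_simp <;> first | linear_combination (-v.im) * h | linear_combination (v.re + v.im) * h | linear_combination v.re * h


lemma ray_deg (hsc : StrictConvex ℝ K) (hcl : IsClosed K) {p x y x' y' : ℂ} {r τ : ℝ}
    (hr : 0 < r) (hr1 : r ≠ 1) (hτ : 0 < τ)
    (hx : x ∈ frontier K) (hy : y ∈ frontier K)
    (hx' : x' ∈ frontier K) (hy' : y' ∈ frontier K)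
    (hxp : x' - p = r • (x - p)) (hyp : y' - p = r • (y - p))
    (hxy : x ≠ y) (hxp0 : x ≠ p) (h : y - p = τ • (x - p)) : False := by
  have hw : x - p ≠ 0 := sub_ne_zero.mpr hxp0
  have Hx : p + (1:ℝ) • (x - p) ∈ frontier K := by
    have e : p + (1:ℝ) • (x - p) = x := by rw [one_smul]; ring
    rwa [e]
  have Hx' : p + r • (x - p) ∈ frontier K := by
    have e : p + r • (x - p) = x' := by
      simp only [Complex.real_smul] at hxp ⊢; linear_combination -hxp
    rwa [e]
  have Hy : p + τ • (x - p) ∈ frontier K := by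
    have e : p + τ • (x - p) = y := by
      simp only [Complex.real_smul] at h ⊢; linear_combination -h
    rwa [e]
  have Hy' : p + (r * τ) • (x - p) ∈ frontier K := by
    have e : p + (r * τ) • (x - p) = y' := by
      simp only [Complex.real_smul] at h hyp ⊢; push_cast
      linear_combination -hyp - (r : ℂ) * h
    rwa [e]
  rcases eq_or_ne τ 1 with h1 | h1
  · apply hxy
    rw [h1, one_smul] at h
    have : y - p - (x - p) = 0 := by rw [h]; ring
    have h4 : y - x = 0 := by linear_combination this
    exact (sub_eq_zero.mp h4).symm
  · rcases eq_or_ne τ r with h2 | h2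
    · have hrr1 : r * r ≠ 1 := by
        intro hh
        have : (r - 1) * (r + 1) = 0 := by linear_combination hh
        rcases mul_eq_zero.mp this with h3 | h3
        · exact hr1 (by linarith)
        · linarith
      have hrr2 : r ≠ r * r := by
        intro hh
        apply hr1
        have h5 : r * 1 = r * r := by linarith
        have := mul_left_cancel₀ (ne_of_gt hr) h5
        linarith
      rw [h2] at Hy'
      exact three_frontier hsc hcl hw (Ne.symm hr1) hrr1.symm hrr2 Hx Hx' Hy'
    · exact three_frontier hsc hcl hw (Ne.symm hr1) (Ne.symm h1) (Ne.symm h2) Hx Hx' Hy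

lemma trans_deg (hsc : StrictConvex ℝ K) (hcl : IsClosed K) {x y v : ℂ} {τ : ℝ}
    (hv : v ≠ 0)
    (hx : x ∈ frontier K) (hy : y ∈ frontier K)
    (hx' : x + v ∈ frontier K) (hy' : y + v ∈ frontier K)
    (hxy : x ≠ y) (h : y - x = τ • v) : False := by
  have hτ0 : τ ≠ 0 := by
    intro hh; apply hxy
    rw [hh, zero_smul, sub_eq_zero] at h; exact h.symm
  have H0 : x + (0:ℝ) • v ∈ frontier K := by rwa [zero_smul, add_zero]
  have H1 : x + (1:ℝ) • v ∈ frontier K := by rwa [one_smul]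
  have Hτ : x + τ • v ∈ frontier K := by
    have e : x + τ • v = y := by
      simp only [Complex.real_smul] at h ⊢; linear_combination -h
    rwa [e]
  have Hτ1 : x + (τ + 1) • v ∈ frontier K := by
    have e : x + (τ + 1) • v = y + v := by
      simp only [Complex.real_smul] at h ⊢; push_cast; linear_combination -h
    rwa [e]
  rcases eq_or_ne τ 1 with h1 | h1
  · rw [h1] at Hτ1
    exact three_frontier hsc hcl hv (by norm_num) (by norm_num : (0:ℝ) ≠ 1 + 1)
      (by norm_num : (1:ℝ) ≠ 1 + 1) H0 H1 Hτ1
  · exact three_frontier hsc hcl hv (by norm_num) (Ne.symm hτ0) (Ne.symm h1) H0 H1 Hτ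

lemma core (hsc : StrictConvex ℝ K) (hcl : IsClosed K)
    {p a b c a' b' c' : ℂ} {r μ ν σ : ℝ}
    (hr : 0 < r) (hr1 : r ≠ 1)
    (ha : a ∈ frontier K) (hc : c ∈ frontier K) (hb : b ∈ frontier K)
    (ha' : a' ∈ frontier K) (hc' : c' ∈ frontier K) (hb' : b' ∈ frontier K)
    (hap : a' - p = r • (a - p)) (hcp : c' - p = r • (c - p)) (hbp : b' - p = r • (b - p))
    (hac : a ≠ c) (hac' : a' ≠ c') (hbp0 : b ≠ p)
    (hμ : 0 < μ) (hν : 0 < ν) (hσ : 0 < σ)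
    (hx : μ • a + ν • c = (μ + ν) • p + σ • (b - p)) : False := by
  have hw : b - p ≠ 0 := sub_ne_zero.mpr hbp0
  have hμν : (0:ℝ) < μ + ν := by linarith
  set t : ℝ := μ / (μ + ν) with htdef
  set s : ℝ := σ / (μ + ν) with hsdef
  have ht0 : 0 < t := div_pos hμ hμν
  have ht1 : t < 1 := by rw [htdef, div_lt_one hμν]; linarith
  have hs0 : 0 < s := div_pos hσ hμν
  have hfs : frontier K ⊆ K := hcl.frontier_subset
  have h1t : (1:ℝ) - t = ν / (μ + ν) := by rw [htdef]; field_simp; ring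
  have h1 : t • a + (1 - t) • c = p + s • (b - p) := by
    have e1 : t • a = (μ + ν)⁻¹ • (μ • a) := by rw [smul_smul, htdef, div_eq_inv_mul]
    have e2 : (1 - t) • c = (μ + ν)⁻¹ • (ν • c) := by rw [smul_smul, h1t, div_eq_inv_mul]
    rw [e1, e2, ← smul_add, hx, smul_add, smul_smul, inv_mul_cancel₀ hμν.ne', one_smul,
      smul_smul, hsdef, div_eq_inv_mul]
  have hxK : p + s • (b - p) ∈ interior K := by
    rw [← h1]; exact hsc (hfs ha) (hfs hc) hac ht0 (by linarith) (by ring)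
  have h2 : t • a' + (1 - t) • c' = p + (r * s) • (b - p) := by
    simp only [Complex.real_smul] at h1 hap hcp ⊢
    push_cast at h1 hap hcp ⊢
    linear_combination (t : ℂ) * hap + ((1:ℂ) - (t:ℝ)) * hcp + (r : ℂ) * h1
  have hx'K : p + (r * s) • (b - p) ∈ interior K := by
    rw [← h2]; exact hsc (hfs ha') (hfs hc') hac' ht0 (by linarith) (by ring)
  have hbmem : p + (1:ℝ) • (b - p) ∈ frontier K := by
    have e : p + (1:ℝ) • (b - p) = b := by rw [one_smul]; ring
    rwa [e]
  have hbmem' : p + r • (b - p) ∈ frontier K := by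
    have e : p + r • (b - p) = b' := by
      simp only [Complex.real_smul] at hbp ⊢; linear_combination -hbp
    rwa [e]
  rcases lt_or_gt_of_ne hr1 with h | h
  · obtain ⟨u1, u2⟩ := sandwich hsc hcl hw h hbmem' hbmem hxK
    obtain ⟨u3, u4⟩ := sandwich hsc hcl hw h hbmem' hbmem hx'K
    nlinarith
  · obtain ⟨u1, u2⟩ := sandwich hsc hcl hw h hbmem hbmem' hxK
    obtain ⟨u3, u4⟩ := sandwich hsc hcl hw h hbmem hbmem' hx'K
    nlinarith

lemma trans_core (hsc : StrictConvex ℝ K) (hcl : IsClosed K) {a b c v : ℂ}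
    (hv : v ≠ 0) {μ ν σ : ℝ} (hμ : 0 < μ) (hν : 0 < ν)
    (hac : a ≠ c)
    (ha : a ∈ frontier K) (hc : c ∈ frontier K) (hb : b ∈ frontier K)
    (ha' : a + v ∈ frontier K) (hc' : c + v ∈ frontier K) (hb' : b + v ∈ frontier K)
    (hx : μ • a + ν • c = (μ + ν) • b + σ • v) : False := by
  have hμν : (0:ℝ) < μ + ν := by linarith
  set t : ℝ := μ / (μ + ν) with htdef
  set s : ℝ := σ / (μ + ν) with hsdef
  have ht0 : 0 < t := div_pos hμ hμν
  have ht1 : t < 1 := by rw [htdef, div_lt_one hμν]; linarith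
  have hfs : frontier K ⊆ K := hcl.frontier_subset
  have h1t : (1:ℝ) - t = ν / (μ + ν) := by rw [htdef]; field_simp; ring
  have h1 : t • a + (1 - t) • c = b + s • v := by
    have e1 : t • a = (μ + ν)⁻¹ • (μ • a) := by rw [smul_smul, htdef, div_eq_inv_mul]
    have e2 : (1 - t) • c = (μ + ν)⁻¹ • (ν • c) := by rw [smul_smul, h1t, div_eq_inv_mul]
    rw [e1, e2, ← smul_add, hx, smul_add, smul_smul, inv_mul_cancel₀ hμν.ne', one_smul,
      smul_smul, hsdef, div_eq_inv_mul]
  have hac' : a + v ≠ c + v := fun hh => hac (by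
    have : a + v - v = c + v - v := by rw [hh]
    simpa using this)
  have hxK : b + s • v ∈ interior K := by
    rw [← h1]; exact hsc (hfs ha) (hfs hc) hac ht0 (by linarith) (by ring)
  have h2 : t • (a + v) + (1 - t) • (c + v) = b + (s + 1) • v := by
    simp only [Complex.real_smul] at h1 ⊢
    push_cast at h1 ⊢
    linear_combination h1
  have hx'K : b + (s + 1) • v ∈ interior K := by
    rw [← h2]; exact hsc (hfs ha') (hfs hc') hac' ht0 (by linarith) (by ring)
  have hbmem : b + (0:ℝ) • v ∈ frontier K := by rwa [zero_smul, add_zero]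
  have hbmem' : b + (1:ℝ) • v ∈ frontier K := by rwa [one_smul]
  obtain ⟨u1, u2⟩ := sandwich hsc hcl hv (by norm_num : (0:ℝ) < 1) hbmem hbmem' hxK
  obtain ⟨u3, u4⟩ := sandwich hsc hcl hv (by norm_num : (0:ℝ) < 1) hbmem hbmem' hx'K
  linarith

end Stmt12Aux

open Stmt12Aux in
/-- Two positively homothetic triangles (related by `f x = r • x + v`, `r > 0`,
with no rotation) with all six vertices on the frontier of a compact strictly
convex set `K ⊆ ℝ² = ℂ` with nonempty interior must coincide. -/
theorem stmt_12 (K : Set ℂ) (hK : IsCompact K) (hsc : StrictConvex ℝ K)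
    (hint : (interior K).Nonempty)
    (a b c a' b' c' : ℂ) (hndg : AffineIndependent ℝ ![a, b, c])
    (ha : a ∈ frontier K) (hb : b ∈ frontier K) (hc : c ∈ frontier K)
    (ha' : a' ∈ frontier K) (hb' : b' ∈ frontier K) (hc' : c' ∈ frontier K)
    (r : ℝ) (hr : 0 < r) (v : ℂ)
    (hfa : a' = r • a + v) (hfb : b' = r • b + v) (hfc : c' = r • c + v) :
    a = a' ∧ b = b' ∧ c = c' := by
  have hcl : IsClosed K := hK.isClosed
  have hfs : frontier K ⊆ K := hcl.frontier_subset
  have hinj := hndg.injective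
  have hab : a ≠ b := by
    intro h
    have : (0 : Fin 3) = 1 := hinj (by simp [h])
    exact absurd this (by decide)
  have hac : a ≠ c := by
    intro h
    have : (0 : Fin 3) = 2 := hinj (by simp [h])
    exact absurd this (by decide)
  have hbc : b ≠ c := by
    intro h
    have : (1 : Fin 3) = 2 := hinj (by simp [h])
    exact absurd this (by decide)
  rcases eq_or_ne r 1 with hr1 | hr1
  · -- translation case
    subst hr1
    rw [one_smul] at hfa hfb hfc
    have hv : v = 0 := by
      by_contra hv0
      subst hfa; subst hfb; subst hfc
      by_cases h1 : det2 v (c - a) = 0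
      · obtain ⟨τ, hτ⟩ := parallel_of_det hv0 h1
        exact trans_deg hsc hcl hv0 ha hc ha' hc' hac hτ
      by_cases h2 : det2 v (c - b) = 0
      · obtain ⟨τ, hτ⟩ := parallel_of_det hv0 h2
        exact trans_deg hsc hcl hv0 hb hc hb' hc' hbc hτ
      by_cases h3 : det2 v (b - a) = 0
      · obtain ⟨τ, hτ⟩ := parallel_of_det hv0 h3
        exact trans_deg hsc hcl hv0 ha hb ha' hb' hab hτ
      set α : ℝ := det2 (b - a) (c - a) / det2 v (c - a) with hαdef
      set β : ℝ := det2 v (b - a) / det2 v (c - a) with hβdef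
      have hdec : b - a = α • v + β • (c - a) := decomp h1 (b - a)
      have hβ0 : β ≠ 0 := div_ne_zero h3 h1
      have hβ1 : β ≠ 1 := by
        intro hh
        apply h2
        rw [hβdef] at hh
        have he : det2 v (b - a) = det2 v (c - a) := by
          field_simp at hh
          exact hh
        simp only [det2, Complex.sub_re, Complex.sub_im] at he ⊢
        linear_combination -he
      have hdecC : b - a = (α:ℂ) * v + (β:ℂ) * (c - a) := by
        simpa only [Complex.real_smul] using hdec
      rcases lt_trichotomy β 0 with hβ | hβ | hβ
      · -- a is the middle point
        refine trans_core hsc hcl hv0 (σ := α) one_pos (neg_pos.mpr hβ) hbc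
          hb hc ha hb' hc' ha' ?_
        simp only [Complex.real_smul]; push_cast; linear_combination hdecC
      · exact absurd hβ hβ0
      · rcases lt_trichotomy β 1 with hβ2 | hβ2 | hβ2
        · -- b is the middle point
          refine trans_core hsc hcl hv0 (σ := -α) (by linarith : (0:ℝ) < 1 - β) hβ hac
            ha hc hb ha' hc' hb' ?_
          simp only [Complex.real_smul]; push_cast; linear_combination -hdecC
        · exact absurd hβ2 hβ1
        · -- c is the middle point
          refine trans_core hsc hcl hv0 (σ := α) one_pos (by linarith : (0:ℝ) < β - 1) (Ne.symm hab)
            hb ha hc hb' ha' hc' ?_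
          simp only [Complex.real_smul]; push_cast; linear_combination hdecC
    subst hv
    rw [add_zero] at hfa hfb hfc
    exact ⟨hfa.symm, hfb.symm, hfc.symm⟩
  · exfalso
    have hab' : a' ≠ b' := by
      intro h
      apply hab
      apply smul_right_injective ℂ (ne_of_gt hr)
      have h0 : r • a + v = r • b + v := by rw [← hfa, ← hfb, h]
      exact add_right_cancel h0
    have hac' : a' ≠ c' := by
      intro h
      apply hac
      apply smul_right_injective ℂ (ne_of_gt hr)
      have h0 : r • a + v = r • c + v := by rw [← hfa, ← hfc, h]
      exact add_right_cancel h0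
    have hbc' : b' ≠ c' := by
      intro h
      apply hbc
      apply smul_right_injective ℂ (ne_of_gt hr)
      have h0 : r • b + v = r • c + v := by rw [← hfb, ← hfc, h]
      exact add_right_cancel h0
    set p : ℂ := (1 - r)⁻¹ • v with hpdef
    have h1r : (1:ℝ) - r ≠ 0 := sub_ne_zero.mpr (Ne.symm hr1)
    have hvp : v = (1 - r) • p := by
      rw [hpdef, smul_smul, mul_inv_cancel₀ h1r, one_smul]
    have hap : a' - p = r • (a - p) := by
      rw [hfa, hvp]; simp only [Complex.real_smul]; push_cast; ring
    have hbp : b' - p = r • (b - p) := by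
      rw [hfb, hvp]; simp only [Complex.real_smul]; push_cast; ring
    have hcp : c' - p = r • (c - p) := by
      rw [hfc, hvp]; simp only [Complex.real_smul]; push_cast; ring
    by_cases hpK : p ∈ K
    · rcases lt_or_gt_of_ne hr1 with hlt | hgt
      · -- r < 1
        have hgen : ∀ x x' : ℂ, x ∈ frontier K → x' ∈ frontier K →
            x' - p = r • (x - p) → x ≠ p → False := by
          intro x x' hx hx' hxp hxp0
          have he : (1 - r) • p + r • x = x' := by
            simp only [Complex.real_smul] at hxp ⊢; push_cast; linear_combination -hxp
          have hmem := hsc hpK (hfs hx) (Ne.symm hxp0) (by linarith : (0:ℝ) < 1 - r) hr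
            (by ring)
          rw [he] at hmem
          exact hx'.2 hmem
        rcases eq_or_ne a p with hap0 | hap0
        · exact hgen b b' hb hb' hbp (fun hh => hab (hap0.trans hh.symm))
        · exact hgen a a' ha ha' hap hap0
      · -- r > 1
        have hr0 : r ≠ 0 := ne_of_gt hr
        have hgen : ∀ x x' : ℂ, x ∈ frontier K → x' ∈ frontier K →
            x' - p = r • (x - p) → x ≠ p → False := by
          intro x x' hx hx' hxp hxp0
          have hx'p0 : x' ≠ p := by
            intro hh
            apply hxp0
            rw [hh, sub_self] at hxp
            have h5 := (smul_eq_zero.mp hxp.symm).resolve_left hr0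
            exact sub_eq_zero.mp h5
          have hrC : (r:ℂ) ≠ 0 := by exact_mod_cast hr0
          have he : (1 - r⁻¹) • p + r⁻¹ • x' = x := by
            simp only [Complex.real_smul] at hxp ⊢
            push_cast
            field_simp
            linear_combination hxp
          have hinv1 : r⁻¹ < 1 := by
            rw [inv_eq_one_div, div_lt_one (by linarith)]; linarith
          have hmem := hsc hpK (hfs hx') (Ne.symm hx'p0)
            (by linarith : (0:ℝ) < 1 - r⁻¹) (by positivity : (0:ℝ) < r⁻¹) (by ring)
          rw [he] at hmem
          exact hx.2 hmem
        rcases eq_or_ne a p with hap0 | hap0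
        · exact hgen b b' hb hb' hbp (fun hh => hab (hap0.trans hh.symm))
        · exact hgen a a' ha ha' hap hap0
    · -- p ∉ K
      have haK := hfs ha
      have hbK := hfs hb
      have hcK := hfs hc
      have hap0 : a ≠ p := fun h => hpK (h ▸ haK)
      have hbp0 : b ≠ p := fun h => hpK (h ▸ hbK)
      have hcp0 : c ≠ p := fun h => hpK (h ▸ hcK)
      by_cases hD : det2 (a - p) (c - p) = 0
      · obtain ⟨τ, hτ⟩ := parallel_of_det (sub_ne_zero.mpr hap0) hD
        rcases lt_trichotomy τ 0 with hτ0 | hτ0 | hτ0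
        · exact opp_ray hsc hpK haK hcK hτ0 hτ
        · apply hcp0
          rw [hτ0, zero_smul] at hτ
          exact sub_eq_zero.mp hτ
        · exact ray_deg hsc hcl hr hr1 hτ0 ha hc ha' hc' hap hcp hac hap0 hτ
      · set α : ℝ := det2 (b - p) (c - p) / det2 (a - p) (c - p) with hαdef
        set β : ℝ := det2 (a - p) (b - p) / det2 (a - p) (c - p) with hβdef
        have hdec : b - p = α • (a - p) + β • (c - p) := decomp hD (b - p)
        have hdecC : b - p = (α:ℂ) * (a - p) + (β:ℂ) * (c - p) := by
          simpa only [Complex.real_smul] using hdec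
        rcases lt_trichotomy α 0 with hα | hα | hα <;>
          rcases lt_trichotomy β 0 with hβ | hβ | hβ
        · -- α<0, β<0 : p is in the convex hull
          have hd : α + β < 0 := by linarith
          have hdne : α + β ≠ 0 := ne_of_lt hd
          have w1 : 0 ≤ α / (α + β) := by
            rw [div_nonneg_iff]; right; exact ⟨hα.le, hd.le⟩
          have w2 : 0 ≤ β / (α + β) := by
            rw [div_nonneg_iff]; right; exact ⟨hβ.le, hd.le⟩
          have hsum : α / (α + β) + β / (α + β) = 1 := by field_simp
          have hzK := hsc.convex haK hcK w1 w2 hsum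
          have hrel : b - p = (α + β) • ((α / (α + β)) • a + (β / (α + β)) • c - p) := by
            simp only [Complex.real_smul]
            push_cast
            have hdneC : ((α:ℂ) + β) ≠ 0 := by exact_mod_cast (by exact_mod_cast hdne : ((α + β : ℝ):ℂ) ≠ 0)
            field_simp
            linear_combination hdecC
          exact opp_ray hsc hpK hzK hbK hd hrel
        · -- α<0, β=0
          apply opp_ray hsc hpK haK hbK hα
          rw [hβ, zero_smul, add_zero] at hdec
          exact hdec
        · -- α<0, β>0 : c middle
          refine core hsc hcl hr hr1 ha hb hc ha' hb' hc' hap hbp hcp hab hab' hcp0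
            (σ := β) (neg_pos.mpr hα) one_pos hβ ?_
          simp only [Complex.real_smul]; push_cast; linear_combination hdecC
        · -- α=0, β<0
          apply opp_ray hsc hpK hcK hbK hβ
          rw [hα, zero_smul, zero_add] at hdec
          exact hdec
        · -- α=0, β=0
          apply hbp0
          rw [hα, hβ, zero_smul, zero_smul, add_zero] at hdec
          exact sub_eq_zero.mp hdec
        · -- α=0, β>0 : ray through c and b
          apply ray_deg hsc hcl hr hr1 hβ hc hb hc' hb' hcp hbp (Ne.symm hbc) hcp0
          rw [hα, zero_smul, zero_add] at hdec
          exact hdec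
        · -- α>0, β<0 : a middle
          refine core hsc hcl hr hr1 hb hc ha hb' hc' ha' hbp hcp hap hbc hbc' hap0
            (σ := α) one_pos (neg_pos.mpr hβ) hα ?_
          simp only [Complex.real_smul]; push_cast; linear_combination hdecC
        · -- α>0, β=0 : ray through a and b
          apply ray_deg hsc hcl hr hr1 hα ha hb ha' hb' hap hbp hab hap0
          rw [hβ, zero_smul, add_zero] at hdec
          exact hdec
        · -- α>0, β>0 : b middle
          refine core hsc hcl hr hr1 ha hc hb ha' hc' hb' hap hcp hbp hac hac' hbp0
            (σ := 1) hα hβ one_pos ?_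
          simp only [Complex.real_smul]; push_cast; linear_combination -hdecC
end

section
/- Let ω be the circle through d tangent to line ab at a, and let a' be a point such that a and d lie on the same side of line a'b', where a'b'd is the image of abd under the rotation-homothety about d taking a to a'. If a' lies strictly inside ω then line a'b' separates a from d, hence a' must lie on or outside ω. -/
open scoped RealInnerProductSpace

open Complex ComplexConjugate in
private lemma real_mul_iff_im_eq_zero {c z : ℂ} (hc : c ≠ 0) :
    (∃ t : ℝ, (t : ℂ) * c = z) ↔ (z * conj c).im = 0 := by
  constructor
  · rintro ⟨t, rfl⟩
    rw [mul_assoc, Complex.mul_conj]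
    simp
  · intro h
    refine ⟨(z * conj c).re / Complex.normSq c, ?_⟩
    have hnc : (Complex.normSq c : ℝ) ≠ 0 := (Complex.normSq_pos.mpr hc).ne'
    have hc' : ((Complex.normSq c : ℝ) : ℂ) ≠ 0 := by exact_mod_cast hnc
    have hzc : (((z * conj c).re : ℝ) : ℂ) = z * conj c := by
      apply Complex.ext <;> simp [h]
    rw [Complex.ofReal_div, div_mul_eq_mul_div, div_eq_iff hc']
    linear_combination c * hzc + z * (Complex.mul_conj c)

open Complex ComplexConjugate in
/-- membership in the affine span of a pair, complex-coordinates version -/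
private lemma mem_span_pair_iff_im {x' y' x : ℂ} (h : y' - x' ≠ 0) :
    x ∈ affineSpan ℝ ({x', y'} : Set ℂ) ↔ ((x - x') * conj (y' - x')).im = 0 := by
  have hx : x = (x - x') +ᵥ x' := by simp
  rw [← real_mul_iff_im_eq_zero h]
  constructor
  · intro hm
    rw [hx] at hm
    rcases vadd_left_mem_affineSpan_pair.mp hm with ⟨t, ht⟩
    exact ⟨t, by simpa [Complex.real_smul] using ht⟩
  · rintro ⟨t, ht⟩
    rw [hx]
    exact vadd_left_mem_affineSpan_pair.mpr ⟨t, by simpa [Complex.real_smul] using ht⟩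

set_option maxHeartbeats 2000000 in
/-- Let `d ∉ line ab` and let `ω` be the circle (center `o`, radius `ρ`) through `d`
tangent to the line `ab` at `a`. Let `f` be a direct similarity fixing `d`
(`f x = d + r • (u * (x − d))`, `r > 0`, `‖u‖ = 1`), `a' = f a ≠ d`, `b' = f b`.
Then `a'` lies on `ω` iff the line `a'b'` passes through `a`; and if `a'` is strictly
inside `ω` then `a` and `d` lie strictly on opposite sides of the line `a'b'`. -/
theorem stmt_13 (a b d o : ℂ) (ρ : ℝ)
    (hd : ¬ Collinear ℝ ({a, b, d} : Set ℂ))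
    (hoa : dist o a = ρ) (hod : dist o d = ρ)
    (htang : ⟪o - a, b - a⟫ = 0)
    (r : ℝ) (hr : 0 < r) (u : ℂ) (hu : ‖u‖ = 1)
    (a' b' : ℂ) (ha' : a' = d + r • (u * (a - d))) (hb' : b' = d + r • (u * (b - d)))
    (ha'd : a' ≠ d) :
    (dist o a' = ρ ↔ a ∈ affineSpan ℝ ({a', b'} : Set ℂ)) ∧
    (dist o a' < ρ → (affineSpan ℝ ({a', b'} : Set ℂ)).SOppSide a d) := by
  obtain ⟨p, hp_def⟩ : ∃ x : ℂ, x = a - d := ⟨_, rfl⟩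
  obtain ⟨q, hq_def⟩ : ∃ x : ℂ, x = b - a := ⟨_, rfl⟩
  obtain ⟨w, hw_def⟩ : ∃ x : ℂ, x = o - d := ⟨_, rfl⟩
  -- basic real facts
  have hρ : 0 ≤ ρ := hoa ▸ dist_nonneg
  -- e ≠ 0 from non-collinearity
  obtain ⟨e, he_def⟩ : ∃ x : ℝ, x = (p * (starRingEnd ℂ) q).im := ⟨_, rfl⟩
  have he : e ≠ 0 := by
    intro he0
    apply hd
    by_cases hq : q = 0
    · have hba : b = a := by rw [hq_def] at hq; exact sub_eq_zero.mp hq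
      have : ({a, b, d} : Set ℂ) = {a, d} := by
        rw [hba, Set.insert_idem]
      rw [this]
      exact collinear_pair ℝ a d
    · -- p = t q, so d lies on line a b
      obtain ⟨t, ht⟩ := (real_mul_iff_im_eq_zero hq).mpr (by rw [← he_def]; exact he0)
      rw [hp_def, hq_def] at ht
      have hdm : d ∈ affineSpan ℝ ({a, b} : Set ℂ) := by
        have : d = (((-t : ℝ) : ℂ) * (b - a)) +ᵥ a := by
          push_cast
          rw [vadd_eq_add]
          linear_combination ht
        rw [this]
        exact vadd_left_mem_affineSpan_pair.mpr ⟨-t, by simp [Complex.real_smul]⟩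
      have hcol : Collinear ℝ ({d, a, b} : Set ℂ) :=
        collinear_insert_of_mem_affineSpan_pair hdm
      have : ({a, b, d} : Set ℂ) ⊆ {d, a, b} := by intro x; simp; tauto
      exact hcol.subset this
  have hp0 : p ≠ 0 := by intro h; apply he; rw [he_def, h]; simp
  have hq0 : q ≠ 0 := by intro h; apply he; rw [he_def, h]; simp
  have hu0 : u ≠ 0 := by intro h; rw [h] at hu; simp at hu
  have hr0 : (r : ℂ) ≠ 0 := by exact_mod_cast hr.ne'
  have huc : u * (starRingEnd ℂ) u = 1 := by
    rw [Complex.mul_conj, Complex.normSq_eq_norm_sq, hu]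
    norm_num
  -- circle conditions as complex equations
  have hds : Complex.normSq (o - a') = dist o a' ^ 2 := by
    rw [Complex.dist_eq, Complex.sq_norm]
  have hNod : Complex.normSq w = ρ ^ 2 := by
    rw [hw_def, ← Complex.sq_norm, ← Complex.dist_eq, hod]
  have hNoa : Complex.normSq (o - a) = ρ ^ 2 := by
    rw [← Complex.sq_norm, ← Complex.dist_eq, hoa]
  have hvv : (o - a) * (starRingEnd ℂ) (o - a) = w * (starRingEnd ℂ) w := by
    rw [Complex.mul_conj, Complex.mul_conj, hNoa, hNod]
  have hoa' : o - a = w - p := by rw [hw_def, hp_def]; ring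
  have h1c : w * (starRingEnd ℂ) p + (starRingEnd ℂ) w * p = p * (starRingEnd ℂ) p := by
    rw [hoa', map_sub] at hvv
    linear_combination -hvv
  have h2c : ((starRingEnd ℂ) w - (starRingEnd ℂ) p) * q + (w - p) * (starRingEnd ℂ) q = 0 := by
    have h := htang
    rw [Complex.inner] at h
    rw [← hq_def] at h
    have h2 := Complex.add_conj ((starRingEnd ℂ) (o - a) * q)
    rw [map_mul, Complex.conj_conj] at h2
    rw [hoa', map_sub] at h2 h
    rw [mul_comm] at h; rw [h] at h2
    simpa using h2
  have E : w * (p * (starRingEnd ℂ) q - q * (starRingEnd ℂ) p) = p ^ 2 * (starRingEnd ℂ) q := by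
    linear_combination p * h2c - q * h1c
  have conjE : (starRingEnd ℂ) w * ((starRingEnd ℂ) p * q - (starRingEnd ℂ) q * p)
      = ((starRingEnd ℂ) p) ^ 2 * q := by
    linear_combination (starRingEnd ℂ) p * h2c - (starRingEnd ℂ) q * h1c
  have M' : (p * (starRingEnd ℂ) q - q * (starRingEnd ℂ) p) *
        (w * (starRingEnd ℂ) u * (starRingEnd ℂ) p + (starRingEnd ℂ) w * u * p)
      = (p * (starRingEnd ℂ) p) *
        (p * (starRingEnd ℂ) u * (starRingEnd ℂ) q - (starRingEnd ℂ) p * u * q) := by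
    linear_combination ((starRingEnd ℂ) u * (starRingEnd ℂ) p) * E - (u * p) * conjE
  have Mfin : (p * (starRingEnd ℂ) q - q * (starRingEnd ℂ) p) *
        ((w - (r : ℂ) * (u * p)) * ((starRingEnd ℂ) w - (r : ℂ) * ((starRingEnd ℂ) u * (starRingEnd ℂ) p))
          - w * (starRingEnd ℂ) w)
      = -(p * (starRingEnd ℂ) p) *
        ((p - (r : ℂ) * (u * p)) * ((r : ℂ) * ((starRingEnd ℂ) u * (starRingEnd ℂ) q))
          - ((starRingEnd ℂ) p - (r : ℂ) * ((starRingEnd ℂ) u * (starRingEnd ℂ) p)) * ((r : ℂ) * (u * q))) := by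
    linear_combination (-(r : ℂ)) * M'
  -- rewrite in terms of a', b'
  have ho' : o - a' = w - (r : ℂ) * (u * p) := by
    rw [hw_def, hp_def, ha']; simp only [Complex.real_smul]; ring
  have hco' : (starRingEnd ℂ) (o - a') = (starRingEnd ℂ) w - (r : ℂ) * ((starRingEnd ℂ) u * (starRingEnd ℂ) p) := by
    rw [ho']; simp [map_sub, map_mul, Complex.conj_ofReal]
  have haa' : a - a' = p - (r : ℂ) * (u * p) := by
    rw [hp_def, ha']; simp only [Complex.real_smul]; ring
  have hcaa' : (starRingEnd ℂ) (a - a') = (starRingEnd ℂ) p - (r : ℂ) * ((starRingEnd ℂ) u * (starRingEnd ℂ) p) := by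
    rw [haa']; simp [map_sub, map_mul, Complex.conj_ofReal]
  have hab' : b' - a' = (r : ℂ) * (u * q) := by
    rw [hq_def, ha', hb']; simp only [Complex.real_smul]; ring
  have hcab' : (starRingEnd ℂ) (b' - a') = (r : ℂ) * ((starRingEnd ℂ) u * (starRingEnd ℂ) q) := by
    rw [hab']; simp [map_mul, Complex.conj_ofReal]
  have hda' : d - a' = -((r : ℂ) * (u * p)) := by
    rw [hp_def, ha']; simp only [Complex.real_smul]; ring
  obtain ⟨Ga, hGa_def⟩ : ∃ x : ℝ, x = ((a - a') * (starRingEnd ℂ) (b' - a')).im := ⟨_, rfl⟩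
  obtain ⟨Gd, hGd_def⟩ : ∃ x : ℝ, x = ((d - a') * (starRingEnd ℂ) (b' - a')).im := ⟨_, rfl⟩
  obtain ⟨P, hP_def⟩ : ∃ x : ℝ, x = Complex.normSq (o - a') - ρ ^ 2 := ⟨_, rfl⟩
  -- the master identity
  have key := Mfin
  rw [← ho', ← hco', ← haa', ← hcaa', ← hab', ← hcab'] at key
  have h1 : p * (starRingEnd ℂ) q - q * (starRingEnd ℂ) p = ((2 * e : ℝ) : ℂ) * Complex.I := by
    have h := Complex.sub_conj (p * (starRingEnd ℂ) q)
    rw [map_mul, Complex.conj_conj] at h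
    rw [he_def]
    linear_combination h
  have h2 : (a - a') * (starRingEnd ℂ) (b' - a') - (starRingEnd ℂ) (a - a') * (b' - a')
      = ((2 * Ga : ℝ) : ℂ) * Complex.I := by
    have h := Complex.sub_conj ((a - a') * (starRingEnd ℂ) (b' - a'))
    rw [map_mul, Complex.conj_conj] at h
    rw [hGa_def]
    linear_combination h
  have h3 : ((P : ℝ) : ℂ) = (o - a') * (starRingEnd ℂ) (o - a') - w * (starRingEnd ℂ) w := by
    rw [hP_def, Complex.mul_conj, Complex.mul_conj, hNod]
    push_cast; ring
  rw [h1, ← h3, Complex.mul_conj, h2] at key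
  have hMreal : e * P = -(Complex.normSq p) * Ga := by
    have hkey2 : ((e * P : ℝ) : ℂ) = ((-(Complex.normSq p) * Ga : ℝ) : ℂ) := by
      push_cast at key ⊢
      linear_combination (-(Complex.I) / 2) * key +
        ((e : ℂ) * (P : ℝ) + ((Complex.normSq p : ℝ) : ℂ) * (Ga : ℝ)) * Complex.I_mul_I
    exact_mod_cast hkey2
  have hGdval : Gd = -(r ^ 2 * e) := by
    have hzd : (d - a') * (starRingEnd ℂ) (b' - a')
        = -(((r ^ 2 : ℝ) : ℂ) * (p * (starRingEnd ℂ) q)) := by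
      rw [hda', hcab']
      push_cast
      linear_combination (-(r : ℂ) ^ 2 * (p * (starRingEnd ℂ) q)) * huc
    rw [hGd_def, hzd, Complex.neg_im, Complex.im_ofReal_mul, ← he_def]
  -- membership criterion
  have hb'a' : b' - a' ≠ 0 := by
    rw [hab']; exact mul_ne_zero hr0 (mul_ne_zero hu0 hq0)
  have hmem : ∀ x : ℂ, x ∈ affineSpan ℝ ({a', b'} : Set ℂ) ↔
      ((x - a') * (starRingEnd ℂ) (b' - a')).im = 0 := fun x => mem_span_pair_iff_im hb'a'
  have hNp : 0 < Complex.normSq p := Complex.normSq_pos.mpr hp0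
  have hiff1 : dist o a' = ρ ↔ P = 0 := by
    constructor
    · intro h; rw [hP_def, hds, h]; ring
    · intro h
      rw [hP_def, hds] at h
      have h4 : dist o a' ^ 2 = ρ ^ 2 := by linarith
      rw [sq_eq_sq_iff_abs_eq_abs, abs_of_nonneg dist_nonneg, abs_of_nonneg hρ] at h4
      exact h4
  have hiff2 : P = 0 ↔ Ga = 0 := by
    constructor
    · intro h0
      have h5 : -(Complex.normSq p) * Ga = 0 := by rw [← hMreal, h0]; ring
      have h6 : Complex.normSq p * Ga = 0 := by linear_combination -h5
      rcases mul_eq_zero.mp h6 with h | h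
      · exact absurd h hNp.ne'
      · exact h
    · intro h0
      have h5 : e * P = 0 := by rw [hMreal, h0]; ring
      rcases mul_eq_zero.mp h5 with h | h
      · exact absurd h he
      · exact h
  constructor
  · rw [hiff1, hmem a, ← hGa_def]; exact hiff2
  · intro hlt
    have hPneg : P < 0 := by
      rw [hP_def, hds]
      nlinarith [dist_nonneg (x := o) (y := a')]
    have hGa0 : Ga ≠ 0 := by
      intro h0
      exact absurd (hiff2.mpr h0) hPneg.ne
    have hGd0 : Gd ≠ 0 := by
      rw [hGdval]
      intro h0
      have h9 : r ^ 2 * e = 0 := by linarith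
      rcases mul_eq_zero.mp h9 with h | h
      · exact absurd h (pow_ne_zero 2 hr.ne')
      · exact he h
    have h5 : Complex.normSq p * (Ga * Gd) = r ^ 2 * e ^ 2 * P := by
      linear_combination Complex.normSq p * Ga * hGdval - r ^ 2 * e * hMreal
    have hprod : Ga * Gd < 0 := by
      have h6 : 0 < r ^ 2 * e ^ 2 := by
        have h7 : 0 < (r * e) * (r * e) := mul_self_pos.mpr (mul_ne_zero hr.ne' he)
        nlinarith [h7]
      have h8 : Complex.normSq p * (Ga * Gd) < 0 := by
        rw [h5]
        exact mul_neg_of_pos_of_neg h6 hPneg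
      by_contra hcon
      push_neg at hcon
      have h9 : 0 ≤ Complex.normSq p * (Ga * Gd) := mul_nonneg hNp.le hcon
      linarith
    obtain ⟨t, ht_def⟩ : ∃ x : ℝ, x = Ga / (Ga - Gd) := ⟨_, rfl⟩
    have hGaGd : Ga - Gd ≠ 0 := by
      intro h0
      have hGd_eq : Gd = Ga := by linarith
      rw [hGd_eq] at hprod
      have := mul_self_nonneg Ga
      linarith
    have ht0 : 0 < t := by
      rw [ht_def, div_pos_iff]
      rcases hGa0.lt_or_gt with h | h
      · have hGdpos : 0 < Gd := by
          by_contra hh; push_neg at hh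
          have h10 : 0 ≤ (-Ga) * (-Gd) := mul_nonneg (by linarith) (by linarith)
          nlinarith [h10, hprod]
        right; exact ⟨h, by linarith⟩
      · have hGdneg : Gd < 0 := by
          by_contra hh; push_neg at hh
          have h10 : 0 ≤ Ga * Gd := mul_nonneg h.le hh
          linarith
        left; exact ⟨h, by linarith⟩
    have h1t : 0 < 1 - t := by
      have h8 : 1 - t = -Gd / (Ga - Gd) := by
        rw [ht_def]; field_simp; ring
      rw [h8, div_pos_iff]
      rcases hGa0.lt_or_gt with h | h
      · have hGdpos : 0 < Gd := by
          by_contra hh; push_neg at hh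
          have h10 : 0 ≤ (-Ga) * (-Gd) := mul_nonneg (by linarith) (by linarith)
          nlinarith [h10, hprod]
        right; exact ⟨by linarith, by linarith⟩
      · have hGdneg : Gd < 0 := by
          by_contra hh; push_neg at hh
          have h10 : 0 ≤ Ga * Gd := mul_nonneg h.le hh
          linarith
        left; exact ⟨by linarith, by linarith⟩
    obtain ⟨m, hm_def⟩ : ∃ x : ℂ, x = a + ((t : ℝ) : ℂ) * (d - a) := ⟨_, rfl⟩
    have hmmem : m ∈ affineSpan ℝ ({a', b'} : Set ℂ) := by
      rw [hmem m]
      have hsplit : (m - a') * (starRingEnd ℂ) (b' - a')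
          = ((a - a') * (starRingEnd ℂ) (b' - a'))
            + ((t : ℝ) : ℂ) * (((d - a') * (starRingEnd ℂ) (b' - a'))
              - ((a - a') * (starRingEnd ℂ) (b' - a'))) := by
        rw [hm_def]; ring
      rw [hsplit]
      rw [Complex.add_im, Complex.im_ofReal_mul, Complex.sub_im]
      rw [← hGa_def, ← hGd_def, ht_def]
      field_simp
      ring
    refine ⟨⟨m, hmmem, m, hmmem, ?_⟩, ?_, ?_⟩
    · have hv1 : a -ᵥ m = t • (a - d) := by
        rw [hm_def]; simp [vsub_eq_sub, Complex.real_smul]; ring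
      have hv2 : m -ᵥ d = (1 - t) • (a - d) := by
        rw [hm_def]; simp [vsub_eq_sub, Complex.real_smul]; push_cast; ring
      rw [hv1, hv2]
      exact Or.inr (Or.inr ⟨1 - t, t, h1t, ht0, by rw [smul_smul, smul_smul, mul_comm]⟩)
    · intro hmm
      apply hGa0
      rw [hGa_def]
      exact (hmem a).mp hmm
    · intro hdm
      apply hGd0
      rw [hGd_def]
      exact (hmem d).mp hdm
end

section
/- If a convex quadrilateral degenerates so that all four vertices converge to a single point on a convex curve, then the angle at any vertex converges to 0 or π; hence a fixed cyclic quadrilateral with all angles in (0, π) cannot be the limit of such degenerating inscribed copies. -/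
open EuclideanGeometry
open scoped RealInnerProductSpace

open Filter Metric Bornology Set

/-- Bound on the interior extends to the whole convex set. -/
lemma aux_le_on_convex {K : Set ℂ} (hconv : Convex ℝ K) {f : ℂ →L[ℝ] ℝ} {cst : ℝ}
    {x₀ : ℂ} (hx₀ : x₀ ∈ interior K) (h : ∀ x ∈ interior K, f x ≤ cst)
    {x : ℂ} (hx : x ∈ K) : f x ≤ cst := by
  have hseg : ∀ lam ∈ Set.Ioo (0:ℝ) 1, f ((1 - lam) • x₀ + lam • x) ≤ cst := by
    intro lam hlam
    refine h _ (hconv.openSegment_interior_self_subset_interior hx₀ hx ?_)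
    exact ⟨1 - lam, lam, by linarith [hlam.2], hlam.1, by ring, rfl⟩
  have hcont : Filter.Tendsto (fun lam : ℝ => f ((1 - lam) • x₀ + lam • x))
      (nhdsWithin 1 (Set.Ioo 0 1)) (nhds (f x)) := by
    have hc : Continuous (fun lam : ℝ => f ((1 - lam) • x₀ + lam • x)) := by
      fun_prop
    have := (hc.tendsto 1).mono_left (nhdsWithin_le_nhds (s := Set.Ioo 0 1))
    simpa using this
  have hne : (nhdsWithin (1:ℝ) (Set.Ioo 0 1)).NeBot := by
    refine mem_closure_iff_nhdsWithin_neBot.mp ?_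
    rw [closure_Ioo one_ne_zero.symm]
    exact ⟨zero_le_one, le_rfl⟩
  exact le_of_tendsto hcont (eventually_nhdsWithin_of_forall hseg)

/-- If the inner product with the unique unit outer normal is negative, the ray in that
direction enters the interior. -/
lemma aux_enters {K : Set ℂ} (hconv : Convex ℝ K) (hint : (interior K).Nonempty)
    {p : ℂ} (hpK : p ∈ K) {u : ℂ}
    (huniq : ∀ y : ℂ, (‖y‖ = 1 ∧ ∀ x ∈ K, ⟪y, x - p⟫ ≤ 0) → y = u)
    {v : ℂ} (hv : ⟪u, v⟫ < 0) : ∃ t : ℝ, 0 < t ∧ p + t • v ∈ interior K := by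
  by_contra hcon
  push_neg at hcon
  set R : Set ℂ := (fun t : ℝ => p + t • v) '' Set.Ioi 0 with hR
  have hRconv : Convex ℝ R := by
    rintro _ ⟨t1, ht1, rfl⟩ _ ⟨t2, ht2, rfl⟩ α β hα hβ hαβ
    refine ⟨α * t1 + β * t2, ?_, ?_⟩
    · rcases eq_or_lt_of_le hα with h0 | h0
      · have hβ1 : β = 1 := by linarith
        simp only [← h0, hβ1, Set.mem_Ioi] at *
        simpa using ht2
      · have : 0 < α * t1 := mul_pos h0 ht1
        have : 0 ≤ β * t2 := mul_nonneg hβ (le_of_lt ht2)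
        simp only [Set.mem_Ioi]
        linarith
    · have hβ' : β = 1 - α := by linarith
      subst hβ'
      module
  have hdisj : Disjoint (interior K) R := by
    rw [Set.disjoint_left]
    rintro z hz ⟨t, ht, rfl⟩
    exact hcon t ht hz
  obtain ⟨f, cst, hf1, hf2⟩ :=
    geometric_hahn_banach_open hconv.interior isOpen_interior hRconv hdisj
  set w : ℂ := (InnerProductSpace.toDual ℝ ℂ).symm f with hwdef
  have hw : ∀ z : ℂ, ⟪w, z⟫ = f z := fun z => InnerProductSpace.toDual_symm_apply
  obtain ⟨x₀, hx₀⟩ := hint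
  have hfK : ∀ x ∈ K, f x ≤ cst := fun x hx =>
    aux_le_on_convex hconv hx₀ (fun z hz => (hf1 z hz).le) hx
  have hfp_ge : cst ≤ f p := by
    have hc : Filter.Tendsto (fun t : ℝ => f (p + t • v)) (nhdsWithin 0 (Set.Ioi 0))
        (nhds (f p)) := by
      have hc2 : Continuous (fun t : ℝ => f (p + t • v)) := by fun_prop
      have := (hc2.tendsto 0).mono_left (nhdsWithin_le_nhds (s := Set.Ioi 0))
      simpa using this
    refine ge_of_tendsto hc ?_
    refine eventually_nhdsWithin_of_forall (fun t ht => ?_)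
    exact hf2 _ ⟨t, ht, rfl⟩
  have hfp : f p = cst := le_antisymm (hfK p hpK) hfp_ge
  have hfv : 0 ≤ f v := by
    have h1 : cst ≤ f (p + (1:ℝ) • v) := hf2 _ ⟨1, Set.mem_Ioi.mpr zero_lt_one, rfl⟩
    rw [one_smul, map_add] at h1
    linarith
  have hwne : w ≠ 0 := by
    intro h0
    have h1 : f x₀ < cst := hf1 x₀ hx₀
    have h2 : f x₀ = 0 := by rw [← hw, h0, inner_zero_left]
    have h3 : f p = 0 := by rw [← hw, h0, inner_zero_left]
    rw [h2] at h1; rw [h3] at hfp; linarith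
  have hwnorm : (0:ℝ) < ‖w‖ := norm_pos_iff.mpr hwne
  set uhat : ℂ := ‖w‖⁻¹ • w with huhat
  have huhat1 : ‖uhat‖ = 1 := by
    rw [huhat, norm_smul, norm_inv, norm_norm, inv_mul_cancel₀ (ne_of_gt hwnorm)]
  have huhatnorm : ∀ x ∈ K, ⟪uhat, x - p⟫ ≤ 0 := by
    intro x hx
    rw [huhat, real_inner_smul_left]
    have : ⟪w, x - p⟫ = f x - f p := by rw [hw]; simp
    rw [this, hfp]
    have := hfK x hx
    have hnn : (0:ℝ) ≤ ‖w‖⁻¹ := inv_nonneg.mpr (le_of_lt hwnorm)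
    exact mul_nonpos_of_nonneg_of_nonpos hnn (by linarith)
  have heq : uhat = u := huniq uhat ⟨huhat1, huhatnorm⟩
  have : ⟪u, v⟫ = ‖w‖⁻¹ * f v := by
    rw [← heq, huhat, real_inner_smul_left, hw]
  rw [this] at hv
  have : (0:ℝ) ≤ ‖w‖⁻¹ * f v :=
    mul_nonneg (inv_nonneg.mpr (le_of_lt hwnorm)) hfv
  linarith

/-- Claim B: if the frontiers are Hausdorff-close, a ball well inside `K` is inside `Ki`. -/
lemma aux_ballsub {K Ki : Set ℂ} (hKcl : IsClosed K) (hKb : IsBounded K)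
    (hKicl : IsClosed Ki) (hKiconv : Convex ℝ Ki) (hKine : Ki.Nonempty)
    (hKib : IsBounded Ki) (hfrKine : (frontier Ki).Nonempty)
    {q : ℂ} {r : ℝ} (hr : 0 < r) (hball : Metric.ball q (2 * r) ⊆ K)
    (hd : Metric.hausdorffDist (frontier Ki) (frontier K) < r / 2) :
    Metric.ball q r ⊆ Ki := by
  intro z hz
  by_contra hzK
  obtain ⟨π, hπK, hproj⟩ :=
    exists_norm_eq_iInf_of_complete_convex hKine hKicl.isComplete hKiconv z
  rw [norm_eq_iInf_iff_real_inner_le_zero hKiconv hπK] at hproj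
  set w : ℂ := z - π with hwdef
  have hwne : w ≠ 0 := sub_ne_zero.mpr (fun h => hzK (h ▸ hπK))
  have hwpos : (0:ℝ) < ‖w‖ := norm_pos_iff.mpr hwne
  set what : ℂ := ‖w‖⁻¹ • w with hwhat
  have hwhat1 : ‖what‖ = 1 := by
    rw [hwhat, norm_smul, norm_inv, norm_norm, inv_mul_cancel₀ (ne_of_gt hwpos)]
  have hhalf : ∀ y ∈ Ki, ⟪what, y⟫ ≤ ⟪what, z⟫ := by
    intro y hy
    have h1 : ⟪w, y - π⟫ ≤ 0 := hproj y hy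
    have h2 : ⟪w, y⟫ ≤ ⟪w, π⟫ := by
      have := inner_sub_right (𝕜 := ℝ) w y π
      linarith [this ▸ h1, inner_sub_right (𝕜 := ℝ) w y π]
    have h3 : ⟪w, π⟫ = ⟪w, z⟫ - ⟪w, w⟫ := by
      have := inner_sub_right (𝕜 := ℝ) w z π
      rw [← hwdef] at this
      linarith
    have h4 : (0:ℝ) ≤ ⟪w, w⟫ := real_inner_self_nonneg
    rw [hwhat, real_inner_smul_left, real_inner_smul_left]
    have hinv : (0:ℝ) ≤ ‖w‖⁻¹ := inv_nonneg.mpr hwpos.le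
    have : ⟪w, y⟫ ≤ ⟪w, z⟫ := by linarith
    exact mul_le_mul_of_nonneg_left this hinv
  -- the exit point of the ray from q in direction what
  set S : Set ℝ := {t : ℝ | 0 ≤ t ∧ q + t • what ∈ K} with hS
  have hq : q ∈ K := hball (Metric.mem_ball_self (by linarith))
  have hSne : S.Nonempty := ⟨0, le_rfl, by simpa using hq⟩
  obtain ⟨RR, hRR⟩ := (isBounded_iff_subset_closedBall q).mp hKb
  have hSbdd : BddAbove S := by
    refine ⟨RR, fun t ht => ?_⟩
    have := hRR ht.2
    have hdist : dist (q + t • what) q = t := by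
      rw [dist_eq_norm]
      simp [norm_smul, hwhat1, abs_of_nonneg ht.1]
    rw [Metric.mem_closedBall, hdist] at this
    exact this
  have hScl : IsClosed S := by
    have : S = Set.Ici (0:ℝ) ∩ (fun t : ℝ => q + t • what) ⁻¹' K := by
      ext t; simp [hS, Set.mem_Ici, and_comm]
    rw [this]
    exact isClosed_Ici.inter (hKcl.preimage (by fun_prop))
  set T : ℝ := sSup S with hT
  have hTS : T ∈ S := hScl.csSup_mem hSne hSbdd
  have hT2r : 2 * r ≤ T := by
    by_contra hlt
    push_neg at hlt
    have h0T : 0 ≤ T := hTS.1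
    set t := (T + 2 * r) / 2 with htdef
    have ht1 : T < t := by rw [htdef]; linarith
    have ht2 : t < 2 * r := by rw [htdef]; linarith
    have htS : t ∈ S := by
      refine ⟨by linarith, hball ?_⟩
      rw [Metric.mem_ball, dist_eq_norm]
      simp [norm_smul, hwhat1, abs_of_nonneg (by linarith : (0:ℝ) ≤ t), ht2]
    exact absurd (le_csSup hSbdd htS) (not_le.mpr ht1)
  set F : ℂ := q + T • what with hF
  have hFK : F ∈ K := hTS.2
  have hFfr : F ∈ frontier K := by
    rw [hKcl.frontier_eq]
    refine ⟨hFK, fun hFint => ?_⟩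
    obtain ⟨ε, hε, hballF⟩ := Metric.isOpen_iff.mp isOpen_interior F hFint
    have hmem : q + (T + ε / 2) • what ∈ K := by
      refine interior_subset (hballF ?_)
      rw [Metric.mem_ball, dist_eq_norm, hF]
      have : q + (T + ε / 2) • what - (q + T • what) = (ε / 2) • what := by module
      rw [this, norm_smul, hwhat1, mul_one, Real.norm_eq_abs,
        abs_of_nonneg (by linarith : (0:ℝ) ≤ ε / 2)]
      linarith
    have : T + ε / 2 ∈ S := ⟨by linarith [hTS.1], hmem⟩
    have := le_csSup hSbdd this
    linarith
  have hfin : EMetric.hausdorffEdist (frontier K) (frontier Ki) ≠ ⊤ := by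
    refine Metric.hausdorffEdist_ne_top_of_nonempty_of_bounded ⟨F, hFfr⟩ hfrKine ?_ ?_
    · exact hKb.subset (hKcl.frontier_subset)
    · exact hKib.subset (hKicl.frontier_subset)
  have hd' : Metric.hausdorffDist (frontier K) (frontier Ki) < r / 2 := by
    rwa [Metric.hausdorffDist_comm] at hd
  obtain ⟨yb, hybfr, hyb⟩ := Metric.exists_dist_lt_of_hausdorffDist_lt hFfr hd' hfin
  have hybKi : yb ∈ Ki := hKicl.frontier_subset hybfr
  -- now the numerical contradiction
  have e1 : ⟪what, yb⟫ ≤ ⟪what, z⟫ := hhalf yb hybKi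
  have e2 : ⟪what, z⟫ < ⟪what, q⟫ + r := by
    have h1 : ⟪what, z⟫ - ⟪what, q⟫ = ⟪what, z - q⟫ := by
      rw [inner_sub_right]
    have h2 : ⟪what, z - q⟫ ≤ ‖what‖ * ‖z - q‖ := real_inner_le_norm _ _
    have h3 : ‖z - q‖ < r := by rwa [← dist_eq_norm, ← Metric.mem_ball]
    rw [hwhat1, one_mul] at h2
    linarith
  have e3 : ⟪what, q⟫ + 2 * r - r / 2 < ⟪what, yb⟫ := by
    have h1 : ⟪what, F⟫ = ⟪what, q⟫ + T := by
      rw [hF, inner_add_right, real_inner_smul_right, real_inner_self_eq_norm_sq, hwhat1]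
      ring
    have h2 : ⟪what, F⟫ - ⟪what, yb⟫ = ⟪what, F - yb⟫ := by rw [inner_sub_right]
    have h3 : ⟪what, F - yb⟫ ≤ ‖what‖ * ‖F - yb‖ := real_inner_le_norm _ _
    have h4 : ‖F - yb‖ < r / 2 := by rw [← dist_eq_norm]; exact hyb
    rw [hwhat1, one_mul] at h3
    linarith
  linarith

/-- Claim C': a sequence of chords of the approximating boundaries, shrinking to `p`, cannot
have directions converging to something with positive inner product with the normal. -/
lemma aux_chord (K : Set ℂ) (hK : IsCompact K) (hconv : Convex ℝ K)
    (hint : (interior K).Nonempty)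
    (Ki : ℕ → Set ℂ) (hKi : ∀ i, IsCompact (Ki i)) (hKiconv : ∀ i, Convex ℝ (Ki i))
    (hKine : ∀ i, (Ki i).Nonempty)
    (hH : Filter.Tendsto (fun i => Metric.hausdorffDist (frontier (Ki i)) (frontier K))
      Filter.atTop (nhds 0))
    (p u : ℂ) (hpK : p ∈ K)
    (huniq : ∀ y : ℂ, (‖y‖ = 1 ∧ ∀ x ∈ K, ⟪y, x - p⟫ ≤ 0) → y = u)
    (σ : ℕ → ℕ) (hσ : Filter.Tendsto σ Filter.atTop Filter.atTop)
    (x y : ℕ → ℂ) (hx : ∀ k, x k ∈ frontier (Ki (σ k))) (hy : ∀ k, y k ∈ frontier (Ki (σ k)))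
    (hxy : ∀ k, x k ≠ y k)
    (hlx : Filter.Tendsto x Filter.atTop (nhds p)) (hly : Filter.Tendsto y Filter.atTop (nhds p))
    (v : ℂ) (hvlim : Filter.Tendsto (fun k => ‖x k - y k‖⁻¹ • (x k - y k))
      Filter.atTop (nhds v))
    (hpos : 0 < ⟪u, v⟫) : False := by
  have hvneg : ⟪u, -v⟫ < 0 := by rw [inner_neg_right]; linarith
  obtain ⟨t, ht, hqint⟩ := aux_enters hconv hint hpK huniq hvneg
  set q : ℂ := p + t • (-v) with hq
  obtain ⟨ε, hε, hballε⟩ := Metric.isOpen_iff.mp isOpen_interior q hqint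
  set r : ℝ := ε / 4 with hrdef
  have hr : 0 < r := by rw [hrdef]; linarith
  have hball2r : Metric.ball q (2 * r) ⊆ K := by
    refine Subset.trans ?_ (interior_subset (s := K))
    refine Subset.trans ?_ hballε
    exact Metric.ball_subset_ball (by rw [hrdef]; linarith)
  set vk : ℕ → ℂ := fun k => ‖x k - y k‖⁻¹ • (x k - y k) with hvk
  set zk : ℕ → ℂ := fun k => y k - t • vk k with hzk
  have hzlim : Filter.Tendsto zk Filter.atTop (nhds q) := by
    have : Filter.Tendsto (fun k => y k - t • vk k) Filter.atTop (nhds (p - t • v)) :=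
      hly.sub (hvlim.const_smul t)
    have hqeq : q = p - t • v := by rw [hq]; module
    rw [hqeq]
    exact this
  have h1 : ∀ᶠ k in Filter.atTop, zk k ∈ Metric.ball q r :=
    hzlim.eventually (Metric.isOpen_ball.eventually_mem (Metric.mem_ball_self hr))
  have h2 : ∀ᶠ k in Filter.atTop,
      Metric.hausdorffDist (frontier (Ki (σ k))) (frontier K) < r / 2 :=
    (hH.comp hσ).eventually_lt_const (by linarith)
  obtain ⟨k, hk1, hk2⟩ := (h1.and h2).exists
  set i := σ k with hi
  have hballsub : Metric.ball q r ⊆ Ki i :=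
    aux_ballsub hK.isClosed hK.isBounded (hKi i).isClosed (hKiconv i) (hKine i)
      (hKi i).isBounded ⟨x k, hx k⟩ hr hball2r hk2
  have hzint : zk k ∈ interior (Ki i) :=
    interior_maximal hballsub Metric.isOpen_ball hk1
  have hxKi : x k ∈ Ki i := (hKi i).isClosed.frontier_subset (hx k)
  set s : ℝ := ‖x k - y k‖ with hs
  have hspos : 0 < s := by
    rw [hs, norm_pos_iff]
    exact sub_ne_zero.mpr (hxy k)
  have hxk : x k = y k + s • vk k := by
    rw [hvk, hs]
    simp only [smul_smul]
    rw [mul_inv_cancel₀ (ne_of_gt hspos), one_smul]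
    ring
  have hyseg : y k ∈ openSegment ℝ (zk k) (x k) := by
    refine ⟨s / (t + s), t / (t + s), ?_, ?_, ?_, ?_⟩
    · positivity
    · positivity
    · field_simp
      ring
    · have hts : t + s ≠ 0 := by positivity
      have hgen : ∀ m : ℂ, (s / (t + s)) • (y k - t • m) + (t / (t + s)) • (y k + s • m) = y k := by
        intro m
        match_scalars <;> field_simp <;> ring
      rw [hxk]
      show (s / (t + s)) • (y k - t • vk k) + (t / (t + s)) • (y k + s • vk k) = y k
      exact hgen (vk k)
  have hyint : y k ∈ interior (Ki i) :=
    (hKiconv i).openSegment_interior_self_subset_interior hzint hxKi hyseg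
  have hyfr := hy k
  rw [(hKi i).isClosed.frontier_eq] at hyfr
  exact hyfr.2 hyint

/-- Unit vectors orthogonal to a unit vector in `ℂ` are `±(I * u)`. -/
lemma aux_perp {u z : ℂ} (hu : ‖u‖ = 1) (hz : ‖z‖ = 1) (h : ⟪u, z⟫ = 0) :
    z = Complex.I * u ∨ z = -(Complex.I * u) := by
  have hre : ((starRingEnd ℂ) u * z).re = 0 := by
    rw [mul_comm, ← Complex.inner]; exact h
  have habs : ‖(starRingEnd ℂ) u * z‖ = 1 := by
    rw [norm_mul, Complex.norm_conj, hu, hz, one_mul]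
  set c : ℂ := (starRingEnd ℂ) u * z with hc
  have h1 : c.re * c.re + c.im * c.im = 1 := by
    have h2 : Complex.normSq c = 1 := by
      rw [← Complex.sq_norm, habs]; norm_num
    rw [← h2, Complex.normSq_apply]
  rw [hre] at h1
  have him : c.im = 1 ∨ c.im = -1 := by
    have h3 : (c.im - 1) * (c.im + 1) = 0 := by nlinarith
    rcases mul_eq_zero.mp h3 with h4 | h4
    · left; linarith
    · right; linarith
  have hnsq : Complex.normSq u = 1 := by
    rw [Complex.normSq_eq_norm_sq, hu]; norm_num
  have huu : u * (starRingEnd ℂ) u = 1 := by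
    rw [Complex.mul_conj, hnsq, Complex.ofReal_one]
  have hzc : z = u * c := by
    rw [hc, ← mul_assoc, huu, one_mul]
  rcases him with h1 | h1
  · left
    have hcI : c = Complex.I := by
      apply Complex.ext <;> simp [hre, h1]
    rw [hzc, hcI]; ring
  · right
    have hcI : c = -Complex.I := by
      apply Complex.ext <;> simp [hre, h1]
    rw [hzc, hcI]; ring

/-- A fixed angle `θ ∈ (0, π)` cannot be the limit of angles of degenerating inscribed
configurations: if compact convex sets `Kᵢ` have frontiers Hausdorff-converging to the
frontier of a compact convex set `K` with nonempty interior, points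
`aᵢ, bᵢ, cᵢ ∈ frontier Kᵢ` all converge to a point `p ∈ frontier K` at which `K` has a
unique unit outer normal (i.e. the boundary is `C¹` at `p`), and `∠ aᵢ bᵢ cᵢ = θ`
for all `i`, then we get a contradiction. -/
theorem stmt_15 (K : Set ℂ) (hK : IsCompact K) (hconv : Convex ℝ K)
    (hint : (interior K).Nonempty)
    (Ki : ℕ → Set ℂ) (hKi : ∀ i, IsCompact (Ki i)) (hKiconv : ∀ i, Convex ℝ (Ki i))
    (hH : Filter.Tendsto (fun i => Metric.hausdorffDist (frontier (Ki i)) (frontier K))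
      Filter.atTop (nhds 0))
    (a b c : ℕ → ℂ)
    (ha : ∀ i, a i ∈ frontier (Ki i)) (hb : ∀ i, b i ∈ frontier (Ki i))
    (hc : ∀ i, c i ∈ frontier (Ki i))
    (hne : ∀ i, a i ≠ b i ∧ c i ≠ b i)
    (p : ℂ) (hp : p ∈ frontier K)
    (hC1 : ∃! u : ℂ, ‖u‖ = 1 ∧ ∀ x ∈ K, ⟪u, x - p⟫ ≤ 0)
    (hla : Filter.Tendsto a Filter.atTop (nhds p))
    (hlb : Filter.Tendsto b Filter.atTop (nhds p))
    (hlc : Filter.Tendsto c Filter.atTop (nhds p))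
    (θ : ℝ) (hθ : θ ∈ Set.Ioo 0 Real.pi)
    (hangle : ∀ i, ∠ (a i) (b i) (c i) = θ) :
    False := by
  obtain ⟨u, ⟨hu1, hunorm⟩, huniq'⟩ := hC1
  have huniq : ∀ y : ℂ, (‖y‖ = 1 ∧ ∀ x ∈ K, ⟪y, x - p⟫ ≤ 0) → y = u := fun y hy => huniq' y hy
  have hpK : p ∈ K := hK.isClosed.frontier_subset hp
  have hKine : ∀ i, (Ki i).Nonempty := fun i => ⟨a i, (hKi i).isClosed.frontier_subset (ha i)⟩
  have habne : ∀ i, a i - b i ≠ 0 := fun i => sub_ne_zero.mpr (hne i).1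
  have hcbne : ∀ i, c i - b i ≠ 0 := fun i => sub_ne_zero.mpr (hne i).2
  set d : ℕ → ℂ := fun i => ‖a i - b i‖⁻¹ • (a i - b i) with hd
  set e : ℕ → ℂ := fun i => ‖c i - b i‖⁻¹ • (c i - b i) with he
  have hdmem : ∀ i, d i ∈ Metric.sphere (0:ℂ) 1 := by
    intro i
    rw [mem_sphere_zero_iff_norm, hd]
    rw [norm_smul, norm_inv, norm_norm, inv_mul_cancel₀ (norm_ne_zero_iff.mpr (habne i))]
  have hemem : ∀ i, e i ∈ Metric.sphere (0:ℂ) 1 := by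
    intro i
    rw [mem_sphere_zero_iff_norm, he]
    rw [norm_smul, norm_inv, norm_norm, inv_mul_cancel₀ (norm_ne_zero_iff.mpr (hcbne i))]
  obtain ⟨dl, hdlmem, φ, hφ, hdtend⟩ := (isCompact_sphere (0:ℂ) 1).tendsto_subseq hdmem
  obtain ⟨el, helmem, ψ, hψ, hetend⟩ :=
    (isCompact_sphere (0:ℂ) 1).tendsto_subseq (fun k => hemem (φ k))
  set ρ : ℕ → ℕ := φ ∘ ψ with hρ
  have hρt : Filter.Tendsto ρ Filter.atTop Filter.atTop := (hφ.comp hψ).tendsto_atTop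
  have hdρ : Filter.Tendsto (fun k => d (ρ k)) Filter.atTop (nhds dl) := hdtend.comp hψ.tendsto_atTop
  have heρ : Filter.Tendsto (fun k => e (ρ k)) Filter.atTop (nhds el) := hetend
  have hdl1 : ‖dl‖ = 1 := mem_sphere_zero_iff_norm.mp hdlmem
  have hel1 : ‖el‖ = 1 := mem_sphere_zero_iff_norm.mp helmem
  -- orthogonality of the limit directions
  have horthd : ⟪u, dl⟫ = 0 := by
    by_contra hne0
    rcases lt_or_gt_of_ne hne0 with hlt | hgt
    · refine aux_chord K hK hconv hint Ki hKi hKiconv hKine hH p u hpK huniq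
        ρ hρt (fun k => b (ρ k)) (fun k => a (ρ k)) (fun k => hb (ρ k)) (fun k => ha (ρ k))
        (fun k => (hne (ρ k)).1.symm) (hlb.comp hρt) (hla.comp hρt) (-dl) ?_ ?_
      · have : ∀ k, ‖b (ρ k) - a (ρ k)‖⁻¹ • (b (ρ k) - a (ρ k)) = -(d (ρ k)) := by
          intro k
          rw [hd]
          simp only
          rw [norm_sub_rev]
          module
        simp_rw [this]
        exact hdρ.neg
      · rw [inner_neg_right]; linarith
    · exact aux_chord K hK hconv hint Ki hKi hKiconv hKine hH p u hpK huniq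
        ρ hρt (fun k => a (ρ k)) (fun k => b (ρ k)) (fun k => ha (ρ k)) (fun k => hb (ρ k))
        (fun k => (hne (ρ k)).1) (hla.comp hρt) (hlb.comp hρt) dl hdρ hgt
  have horthe : ⟪u, el⟫ = 0 := by
    by_contra hne0
    rcases lt_or_gt_of_ne hne0 with hlt | hgt
    · refine aux_chord K hK hconv hint Ki hKi hKiconv hKine hH p u hpK huniq
        ρ hρt (fun k => b (ρ k)) (fun k => c (ρ k)) (fun k => hb (ρ k)) (fun k => hc (ρ k))
        (fun k => (hne (ρ k)).2.symm) (hlb.comp hρt) (hlc.comp hρt) (-el) ?_ ?_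
      · have : ∀ k, ‖b (ρ k) - c (ρ k)‖⁻¹ • (b (ρ k) - c (ρ k)) = -(e (ρ k)) := by
          intro k
          rw [he]
          simp only
          rw [norm_sub_rev]
          module
        simp_rw [this]
        exact heρ.neg
      · rw [inner_neg_right]; linarith
    · exact aux_chord K hK hconv hint Ki hKi hKiconv hKine hH p u hpK huniq
        ρ hρt (fun k => c (ρ k)) (fun k => b (ρ k)) (fun k => hc (ρ k)) (fun k => hb (ρ k))
        (fun k => (hne (ρ k)).2) (hlc.comp hρt) (hlb.comp hρt) el heρ hgt
  -- the cosine of θ equals the inner product of the unit directions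
  have hcos : ∀ i, ⟪d i, e i⟫ = Real.cos θ := by
    intro i
    have h1 : Real.cos θ = ⟪a i - b i, c i - b i⟫ / (‖a i - b i‖ * ‖c i - b i‖) := by
      rw [← hangle i]
      rw [EuclideanGeometry.angle]
      rw [vsub_eq_sub, vsub_eq_sub]
      exact InnerProductGeometry.cos_angle _ _
    rw [h1, hd, he]
    simp only
    rw [real_inner_smul_left, real_inner_smul_right]
    have hab : ‖a i - b i‖ ≠ 0 := norm_ne_zero_iff.mpr (habne i)
    have hcb : ‖c i - b i‖ ≠ 0 := norm_ne_zero_iff.mpr (hcbne i)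
    field_simp
    try ring
  have hcoslim : Real.cos θ = ⟪dl, el⟫ := by
    have h1 : Filter.Tendsto (fun k => ⟪d (ρ k), e (ρ k)⟫) Filter.atTop (nhds ⟪dl, el⟫) :=
      hdρ.inner heρ
    have h2 : (fun k => ⟪d (ρ k), e (ρ k)⟫) = fun _ => Real.cos θ := by
      funext k; exact hcos (ρ k)
    rw [h2] at h1
    exact tendsto_nhds_unique tendsto_const_nhds h1
  -- classify
  have hdcase := aux_perp hu1 hdl1 horthd
  have hecase := aux_perp hu1 hel1 horthe
  have hIu : ‖Complex.I * u‖ = 1 := by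
    rw [norm_mul, Complex.norm_I, one_mul, hu1]
  have hpm : ⟪dl, el⟫ = 1 ∨ ⟪dl, el⟫ = -1 := by
    rcases hdcase with h1 | h1 <;> rcases hecase with h2 | h2 <;> rw [h1, h2]
    · left; rw [real_inner_self_eq_norm_sq, hIu]; norm_num
    · right; rw [inner_neg_right, real_inner_self_eq_norm_sq, hIu]; norm_num
    · right; rw [inner_neg_left, real_inner_self_eq_norm_sq, hIu]; norm_num
    · left; rw [inner_neg_neg, real_inner_self_eq_norm_sq, hIu]; norm_num
  have hsin : 0 < Real.sin θ := Real.sin_pos_of_pos_of_lt_pi hθ.1 hθ.2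
  have hpyth := Real.sin_sq_add_cos_sq θ
  rcases hpm with h1 | h1 <;> rw [← hcoslim] at h1 <;> nlinarith
end
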